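/- Let $H_0$ be an $(n-1) \times (n-1)$ complex symmetric matrix whose imaginary part $\operatorname{Im} H_0$ is positive definite, and let $|\omega| > 0$. Then there exists a unique smooth complex symmetric matrix-valued solution $H(s)$ on all of $\mathbb{R}$ to the matrix Riccati equation $|\omega| \frac{d}{ds} H(s) + H(s)^2 = 0$ with $H(0) = H_0$, and moreover $\operatorname{Im} H(s)$ is positive definite for every $s \in \mathbb{R}$. -/

import Mathlib

open Matrix Finset

set_option linter.unusedSectionVars false
set_option maxHeartbeats 1000000

section RiccatiAux

variable {m : Type*} [Fintype m] [DecidableEq m]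

private lemma im_star_dot (v : m → ℂ) : (star v ⬝ᵥ v).im = 0 := by
  simp only [dotProduct, Pi.star_apply, Complex.im_sum]
  refine Finset.sum_eq_zero fun i _ => ?_
  simp [Complex.mul_im, RCLike.star_def, mul_comm]

private lemma im_quad (C : Matrix m m ℂ) (hC : Cᵀ = C) (v : m → ℂ) :
    (star v ⬝ᵥ C *ᵥ v).im =
      (fun i => (v i).re) ⬝ᵥ (C.map Complex.im) *ᵥ (fun i => (v i).re)
      + (fun i => (v i).im) ⬝ᵥ (C.map Complex.im) *ᵥ (fun i => (v i).im) := by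
  have hs : ∀ i j, C j i = C i j := fun i j => congrFun (congrFun hC i) j
  have L : (star v ⬝ᵥ C *ᵥ v).im = ∑ i, ∑ j,
      (((C i j).re * ((v i).re * (v j).im) - (C i j).re * ((v i).im * (v j).re))
        + ((v i).re * ((C i j).im * (v j).re) + (v i).im * ((C i j).im * (v j).im))) := by
    simp only [dotProduct, mulVec, Pi.star_apply, Finset.mul_sum, Complex.im_sum]
    refine Finset.sum_congr rfl fun i _ => Finset.sum_congr rfl fun j _ => ?_
    simp only [Complex.mul_im, Complex.mul_re, RCLike.star_def, Complex.conj_re, Complex.conj_im]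
    ring
  rw [L]
  simp only [Finset.sum_add_distrib, Finset.sum_sub_distrib]
  have A0 : (∑ i, ∑ j, (C i j).re * ((v i).re * (v j).im))
      = ∑ i, ∑ j, (C i j).re * ((v i).im * (v j).re) := by
    rw [Finset.sum_comm]
    exact Finset.sum_congr rfl fun i _ => Finset.sum_congr rfl fun j _ => by rw [hs i j]; ring
  rw [A0, sub_self, zero_add]
  simp only [dotProduct, mulVec, map_apply, Finset.mul_sum]

private lemma im_quad_pos (C : Matrix m m ℂ) (hC : Cᵀ = C) (hpos : (C.map Complex.im).PosDef)
    {v : m → ℂ} (hv : v ≠ 0) : 0 < (star v ⬝ᵥ C *ᵥ v).im := by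
  rw [im_quad C hC v]
  set x : m → ℝ := fun i => (v i).re with hx
  set y : m → ℝ := fun i => (v i).im with hy
  have hsemi : ∀ z : m → ℝ, 0 ≤ z ⬝ᵥ (C.map Complex.im) *ᵥ z := by
    intro z
    have := (posSemidef_iff_dotProduct_mulVec.mp hpos.posSemidef).2 z
    simpa using this
  by_cases hxz : x = 0
  · have hyz : y ≠ 0 := by
      intro hyz
      apply hv
      funext i
      exact Complex.ext (congrFun hxz i) (congrFun hyz i)
    have := (posDef_iff_dotProduct_mulVec.mp hpos).2 hyz
    simp only [star_trivial] at this
    have h0 : x ⬝ᵥ (C.map Complex.im) *ᵥ x = 0 := by simp [hxz]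
    linarith
  · have := (posDef_iff_dotProduct_mulVec.mp hpos).2 hxz
    simp only [star_trivial] at this
    linarith [hsemi y]

private lemma isUnit_one_add (C : Matrix m m ℂ) (hC : Cᵀ = C) (hpos : (C.map Complex.im).PosDef)
    (c : ℝ) : IsUnit (1 + (c : ℂ) • C) := by
  rw [Matrix.isUnit_iff_isUnit_det, isUnit_iff_ne_zero]
  intro hdet
  obtain ⟨v, hv, hmv⟩ := Matrix.exists_mulVec_eq_zero_iff.mpr hdet
  have h0 : star v ⬝ᵥ ((1 + (c:ℂ) • C) *ᵥ v) = 0 := by rw [hmv, dotProduct_zero]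
  rw [add_mulVec, one_mulVec, smul_mulVec, dotProduct_add, dotProduct_smul] at h0
  have him := congrArg Complex.im h0
  rw [Complex.add_im, im_star_dot, zero_add, smul_eq_mul, Complex.im_ofReal_mul,
    Complex.zero_im] at him
  have hq := im_quad_pos C hC hpos hv
  have hc : c = 0 := by
    rcases mul_eq_zero.mp him with h | h
    · exact h
    · exact absurd h (ne_of_gt hq)
  rw [hc] at hmv
  simp only [Complex.ofReal_zero, zero_smul, add_zero, one_mulVec] at hmv
  exact hv hmv

private lemma dot_map_im (A : Matrix m m ℂ) (x : m → ℝ) :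
    x ⬝ᵥ (A.map Complex.im) *ᵥ x
      = ((fun i => (x i : ℂ)) ⬝ᵥ A *ᵥ (fun i => (x i : ℂ))).im := by
  simp only [dotProduct, mulVec, map_apply, Finset.mul_sum, Complex.im_sum]
  refine Finset.sum_congr rfl fun i _ => Finset.sum_congr rfl fun j _ => ?_
  simp [Complex.mul_im, Complex.mul_re]

private lemma ofReal_smul_eq (r : ℝ) (A : Matrix m m ℂ) : ((r : ℝ) : ℂ) • A = r • A := by
  rw [← smul_one_smul ℂ r A, Complex.real_smul, mul_one]

attribute [local instance] Matrix.linftyOpNormedRing Matrix.linftyOpNormedAlgebra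

private noncomputable def entryCLM (i j : m) : Matrix m m ℂ →L[ℝ] ℂ :=
  LinearMap.toContinuousLinearMap
    { toFun := fun A => A i j, map_add' := fun _ _ => rfl, map_smul' := fun _ _ => rfl }

private lemma hasDerivAt_entry {f : ℝ → Matrix m m ℂ} {f' : Matrix m m ℂ} {s : ℝ}
    (h : HasDerivAt f f' s) (i j : m) : HasDerivAt (fun t => f t i j) (f' i j) s :=
  (entryCLM i j).hasFDerivAt.comp_hasDerivAt s h

private lemma contDiff_entry {f : ℝ → Matrix m m ℂ} (h : ContDiff ℝ (⊤ : ℕ∞) f) (i j : m) :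
    ContDiff ℝ (⊤ : ℕ∞) (fun t => f t i j) :=
  ((entryCLM i j).contDiff).comp h

private lemma matrix_eq_sum_smul (A : Matrix m m ℂ) :
    A = ∑ i, ∑ j, A i j • Matrix.single i j (1:ℂ) := by
  conv_lhs => rw [matrix_eq_sum_single A]
  refine Finset.sum_congr rfl fun i _ => Finset.sum_congr rfl fun j _ => ?_
  rw [smul_single, smul_eq_mul, mul_one]

private lemma hasDerivAt_matrix {f : ℝ → Matrix m m ℂ} {f' : Matrix m m ℂ} {s : ℝ}
    (h : ∀ i j, HasDerivAt (fun t => f t i j) (f' i j) s) : HasDerivAt f f' s := by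
  rw [show f = (fun t => ∑ i, ∑ j, f t i j • Matrix.single i j (1:ℂ)) from
      funext fun t => matrix_eq_sum_smul (f t), matrix_eq_sum_smul f']
  exact HasDerivAt.fun_sum fun i _ => HasDerivAt.fun_sum fun j _ => (h i j).smul_const (Matrix.single i j (1:ℂ))

end RiccatiAux

section RiccatiMain

attribute [local instance] Matrix.linftyOpNormedRing Matrix.linftyOpNormedAlgebra

variable {m : Type*} [Fintype m] [DecidableEq m]

private theorem riccati_main (w : ℝ) (hw : 0 < w)
    (H₀ : Matrix m m ℂ) (hsym : H₀ᵀ = H₀) (hpos : (H₀.map Complex.im).PosDef) :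
    ∃ H : ℝ → Matrix m m ℂ,
      ((∀ i j, ContDiff ℝ (⊤ : ℕ∞) (fun s => H s i j)) ∧
       H 0 = H₀ ∧
       (∀ s : ℝ, (H s)ᵀ = H s) ∧
       (∀ s : ℝ, (w : ℂ) • (Matrix.of fun i j => deriv (fun t => H t i j) s) + (H s) ^ 2 = 0)) ∧
      (∀ s : ℝ, ((H s).map Complex.im).PosDef) ∧
      (∀ H' : ℝ → Matrix m m ℂ,
        ((∀ i j, ContDiff ℝ (⊤ : ℕ∞) (fun s => H' s i j)) ∧
         H' 0 = H₀ ∧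
         (∀ s : ℝ, (H' s)ᵀ = H' s) ∧
         (∀ s : ℝ, (w : ℂ) • (Matrix.of fun i j => deriv (fun t => H' t i j) s) + (H' s) ^ 2 = 0))
        → H' = H) := by
  have hw0 : (w : ℂ) ≠ 0 := by exact_mod_cast ne_of_gt hw
  set M : ℝ → Matrix m m ℂ := fun s => 1 + ((s / w : ℝ) : ℂ) • H₀ with hMdef
  have hMunit : ∀ s, IsUnit (M s) := fun s => isUnit_one_add H₀ hsym hpos (s / w)
  set X : ℝ → Matrix m m ℂ := fun s => Ring.inverse (M s) with hXdef
  have hMX : ∀ s, M s * X s = 1 := fun s => Ring.mul_inverse_cancel _ (hMunit s)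
  have hXM : ∀ s, X s * M s = 1 := fun s => Ring.inverse_mul_cancel _ (hMunit s)
  have hcomm : ∀ s, M s * H₀ = H₀ * M s := by
    intro s
    simp only [hMdef, add_mul, mul_add, one_mul, mul_one, smul_mul_assoc, mul_smul_comm]
  have hXcomm : ∀ s, X s * H₀ = H₀ * X s := by
    intro s
    calc X s * H₀ = X s * H₀ * (M s * X s) := by rw [hMX, mul_one]
      _ = X s * (H₀ * M s) * X s := by simp only [mul_assoc]
      _ = X s * (M s * H₀) * X s := by rw [hcomm]
      _ = (X s * M s) * (H₀ * X s) := by simp only [mul_assoc]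
      _ = H₀ * X s := by rw [hXM, one_mul]
  set H : ℝ → Matrix m m ℂ := fun s => H₀ * X s with hHdef
  have hMH : ∀ s, M s * H s = H₀ := by
    intro s
    calc M s * (H₀ * X s) = (M s * H₀) * X s := by rw [mul_assoc]
      _ = H₀ * (M s * X s) := by rw [hcomm, mul_assoc]
      _ = H₀ := by rw [hMX, mul_one]
  -- transpose facts
  have hMT : ∀ s, (M s)ᵀ = M s := by
    intro s
    simp [hMdef, transpose_add, transpose_smul, hsym]
  have hXT : ∀ s, (X s)ᵀ = X s := by
    intro s
    show (Ring.inverse (M s))ᵀ = Ring.inverse (M s)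
    rw [← Matrix.nonsing_inv_eq_ringInverse, Matrix.transpose_nonsing_inv, hMT,
      Matrix.nonsing_inv_eq_ringInverse]
  have hHsym : ∀ s, (H s)ᵀ = H s := by
    intro s
    rw [hHdef, transpose_mul, hXT, hsym, hXcomm]
  -- derivatives
  have hMder : ∀ s, HasDerivAt M (((w⁻¹ : ℝ) : ℂ) • H₀) s := by
    intro s
    have h1 : HasDerivAt (fun t : ℝ => ((t / w : ℝ) : ℂ)) ((w⁻¹ : ℝ) : ℂ) s := by
      have h0 : HasDerivAt (fun t : ℝ => t / w) w⁻¹ s := by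
        simpa [div_eq_mul_inv] using (hasDerivAt_id s).mul_const w⁻¹
      exact Complex.ofRealCLM.hasFDerivAt.comp_hasDerivAt s h0
    exact (h1.smul_const H₀).const_add 1
  have hXder : ∀ s, HasDerivAt X (-(((w⁻¹ : ℝ) : ℂ)) • (X s * H₀ * X s)) s := by
    intro s
    have hu : ((hMunit s).unit : Matrix m m ℂ) = M s := (hMunit s).unit_spec
    have hXu : (↑((hMunit s).unit⁻¹) : Matrix m m ℂ) = X s := by
      show _ = Ring.inverse (M s)
      conv_rhs => rw [← hu]
      rw [Ring.inverse_unit]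
    have h2 := hasFDerivAt_ringInverse (𝕜 := ℝ) (hMunit s).unit
    rw [hu] at h2
    have h3 := h2.comp_hasDerivAt s (hMder s)
    have h4 : HasDerivAt X ((-ContinuousLinearMap.mulLeftRight ℝ (Matrix m m ℂ)
        (↑((hMunit s).unit⁻¹)) (↑((hMunit s).unit⁻¹))) (((w⁻¹ : ℝ) : ℂ) • H₀)) s := h3
    rw [ContinuousLinearMap.neg_apply, ContinuousLinearMap.mulLeftRight_apply, hXu] at h4
    convert h4 using 1
    rw [neg_smul, neg_inj]
    simp [smul_mul_assoc, mul_smul_comm]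
  have hHder : ∀ s, HasDerivAt H (-(((w⁻¹ : ℝ) : ℂ)) • (H s ^ 2)) s := by
    intro s
    have := HasDerivAt.const_mul H₀ (hXder s)
    convert this using 1
    case e'_4 => rfl
    case e'_5 => rfl
    case e'_6 => rfl
    rw [mul_smul_comm, sq]
    congr 1
    rw [hHdef]
    simp only [mul_assoc]
  -- smoothness
  have hMcd : ContDiff ℝ (⊤ : ℕ∞) M := by
    have hMeq : M = fun s => (1 : Matrix m m ℂ) + (s / w) • H₀ := by
      funext s
      rw [hMdef]
      simp only
      rw [ofReal_smul_eq]
    rw [hMeq]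
    exact contDiff_const.add ((contDiff_id.div_const w).smul contDiff_const)
  have hXcd : ContDiff ℝ (⊤ : ℕ∞) X := by
    rw [contDiff_iff_contDiffAt]
    intro s
    have hu : ((hMunit s).unit : Matrix m m ℂ) = M s := (hMunit s).unit_spec
    have h1 : ContDiffAt ℝ (⊤ : ℕ∞) Ring.inverse (M s) := by
      rw [← hu]; exact contDiffAt_ringInverse ℝ (hMunit s).unit
    exact h1.comp s hMcd.contDiffAt
  have hHcd : ContDiff ℝ (⊤ : ℕ∞) H := contDiff_const.mul hXcd
  -- initial value
  have hH0 : H 0 = H₀ := by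
    have : M 0 = 1 := by simp [hMdef]
    rw [hHdef]
    show H₀ * Ring.inverse (M 0) = H₀
    rw [this, Ring.inverse_one, mul_one]
  -- Riccati equation
  have heq : ∀ s : ℝ, (w : ℂ) • (Matrix.of fun i j => deriv (fun t => H t i j) s)
      + (H s) ^ 2 = 0 := by
    intro s
    have hof : (Matrix.of fun i j => deriv (fun t => H t i j) s)
        = -(((w⁻¹ : ℝ) : ℂ)) • (H s ^ 2) := by
      ext i j
      exact (hasDerivAt_entry (hHder s) i j).deriv
    rw [hof, smul_smul]
    have : (w : ℂ) * -(((w⁻¹ : ℝ) : ℂ)) = -1 := by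
      push_cast
      field_simp
    rw [this, neg_one_smul, neg_add_cancel]
  -- positivity
  have hposH : ∀ s : ℝ, ((H s).map Complex.im).PosDef := by
    intro s
    rw [posDef_iff_dotProduct_mulVec]
    constructor
    · show ((H s).map Complex.im)ᴴ = (H s).map Complex.im
      ext i j
      simp only [conjTranspose_apply, map_apply, star_trivial]
      rw [show H s j i = H s i j from congrFun (congrFun (hHsym s) i) j]
    · intro x hx
      have hu : (fun i => (x i : ℂ)) ≠ 0 := by
        intro h
        apply hx
        funext i
        have h2 := congrFun h i
        simp only [Pi.zero_apply] at h2
        exact Complex.ofReal_eq_zero.mp h2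
      set u : m → ℂ := fun i => (x i : ℂ) with hudef
      set v : m → ℂ := X s *ᵥ u with hvdef
      have hMv : M s *ᵥ v = u := by
        rw [hvdef, mulVec_mulVec, hMX, one_mulVec]
      have hv : v ≠ 0 := by
        intro h
        apply hu
        rw [← hMv, h, mulVec_zero]
      have hstaru : star u = u := by
        funext i
        simp [hudef, Complex.conj_ofReal]
      -- main computation
      have hHu : H s *ᵥ u = H₀ *ᵥ v := by
        rw [hHdef, hvdef, mulVec_mulVec]
      have key : (star u ⬝ᵥ H s *ᵥ u).im = (star v ⬝ᵥ H₀ *ᵥ v).im := by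
        rw [hHu, ← hMv, star_mulVec, ← dotProduct_mulVec, mulVec_mulVec]
        have hconj : (M s)ᴴ * H₀ = H₀ + ((s / w : ℝ) : ℂ) • (H₀ᴴ * H₀) := by
          rw [hMdef]
          simp only [conjTranspose_add, conjTranspose_one, conjTranspose_smul, add_mul, one_mul,
            smul_mul_assoc]
          congr 2
          exact Complex.conj_ofReal _
        rw [hconj, add_mulVec, dotProduct_add, smul_mulVec, dotProduct_smul, smul_eq_mul,
          Complex.add_im, Complex.im_ofReal_mul]
        have hreal : (star v ⬝ᵥ (H₀ᴴ * H₀) *ᵥ v).im = 0 := by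
          rw [← mulVec_mulVec, dotProduct_mulVec, ← star_mulVec, im_star_dot]
        rw [hreal, mul_zero, add_zero]
      have hlhs : star x ⬝ᵥ ((H s).map Complex.im) *ᵥ x = (star u ⬝ᵥ H s *ᵥ u).im := by
        rw [star_trivial, dot_map_im, hstaru]
      rw [hlhs, key]
      exact im_quad_pos H₀ hsym hpos hv
  -- continuity helpers
  have hHcont : Continuous H := hHcd.continuous
  refine ⟨H, ⟨fun i j => contDiff_entry hHcd i j, hH0, hHsym, heq⟩, hposH, ?_⟩
  -- uniqueness
  rintro K ⟨hK1, hK2, _hK3, hK4⟩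
  have hKder : ∀ s : ℝ, HasDerivAt K (-(((w⁻¹ : ℝ) : ℂ)) • (K s ^ 2)) s := by
    intro s
    apply hasDerivAt_matrix
    intro i j
    have hdiff : HasDerivAt (fun t => K t i j) (deriv (fun t => K t i j) s) s :=
      (((hK1 i j).differentiable (by simp)) s).hasDerivAt
    have hofK : (Matrix.of fun i j => deriv (fun t => K t i j) s)
        = -(((w⁻¹ : ℝ) : ℂ)) • (K s ^ 2) := by
      have h := hK4 s
      have h2 : (w : ℂ) • (Matrix.of fun i j => deriv (fun t => K t i j) s) = -(K s ^ 2) := by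
        exact eq_neg_of_add_eq_zero_left h
      calc (Matrix.of fun i j => deriv (fun t => K t i j) s)
          = ((w : ℂ)⁻¹ * (w : ℂ)) • (Matrix.of fun i j => deriv (fun t => K t i j) s) := by
            rw [inv_mul_cancel₀ hw0, one_smul]
        _ = (w : ℂ)⁻¹ • ((w : ℂ) • (Matrix.of fun i j => deriv (fun t => K t i j) s)) := by
            rw [smul_smul]
        _ = -(((w⁻¹ : ℝ) : ℂ)) • (K s ^ 2) := by
            rw [h2]; push_cast; rw [neg_smul, smul_neg]
    have : deriv (fun t => K t i j) s = (-(((w⁻¹ : ℝ) : ℂ)) • (K s ^ 2)) i j := by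
      rw [← hofK]; rfl
    rw [this] at hdiff
    exact hdiff
  have hKcont : Continuous K := by
    rw [continuous_iff_continuousAt]
    exact fun s => (hKder s).continuousAt
  set D : ℝ → Matrix m m ℂ := fun s => M s * (K s - H s) with hDdef
  have hD0 : D 0 = 0 := by
    simp [hDdef, hK2, hH0]
  have hDder : ∀ s : ℝ, HasDerivAt D (-(((w⁻¹ : ℝ) : ℂ)) • (D s * K s)) s := by
    intro s
    have h := (hMder s).mul ((hKder s).sub (hHder s))
    convert h using 1
    case e'_4 => rfl
    case e'_5 => rfl
    case e'_6 => rfl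
    case e'_8 => rfl
    have e2 : M s * K s = D s + H₀ := by
      rw [hDdef]
      show M s * K s = M s * (K s - H s) + H₀
      rw [mul_sub, hMH, sub_add_cancel]
    have e1 : M s * (H s ^ 2) = H₀ * H s := by
      rw [sq, ← mul_assoc, hMH]
    have e3 : M s * (K s ^ 2) = (D s + H₀) * K s := by
      rw [sq, ← mul_assoc, e2]
    have key : ((((w⁻¹:ℝ):ℂ)) • H₀) * (K s - H s)
        + M s * (-(((w⁻¹:ℝ):ℂ)) • K s ^ 2 - -(((w⁻¹:ℝ):ℂ)) • H s ^ 2)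
        = (((w⁻¹:ℝ):ℂ)) • (H₀ * (K s - H s) + (M s * (H s ^ 2) - M s * (K s ^ 2))) := by
      rw [smul_mul_assoc, smul_add, smul_sub]
      simp only [neg_smul, sub_neg_eq_add, mul_add, mul_neg, mul_smul_comm]
      abel
    rw [Pi.sub_apply]
    rw [key, e1, e3, add_mul]
    rw [show H₀ * (K s - H s) + (H₀ * H s - (D s * K s + H₀ * K s))
        = -(D s * K s) from by rw [mul_sub]; abel]
    rw [smul_neg, neg_smul]
  -- apply uniqueness of ODE solutions
  have hDzero : ∀ s₁ : ℝ, D s₁ = 0 := by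
    intro s₁
    set b : ℝ := |s₁| + 1 with hbdef
    have hb : 0 < b := by positivity
    set a : ℝ := -b with hadef
    have hab : a < b := by simp [hadef]; linarith
    set τ : ℝ → ℝ := fun t => max a (min t b) with hτdef
    have hτmem : ∀ t, τ t ∈ Set.Icc a b := by
      intro t
      constructor
      · exact le_max_left _ _
      · exact max_le (le_of_lt hab) (min_le_right _ _)
    have hτeq : ∀ t ∈ Set.Ioo a b, τ t = t := by
      intro t ht
      rw [hτdef]
      simp only
      rw [min_eq_left (le_of_lt ht.2), max_eq_right (le_of_lt ht.1)]
    obtain ⟨B, hB⟩ := (isCompact_Icc (a := a) (b := b)).exists_bound_of_continuousOn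
      hKcont.continuousOn
    have hB0 : 0 ≤ B := le_trans (norm_nonneg (K a)) (hB a ⟨le_refl a, le_of_lt hab⟩)
    set L : NNReal := Real.toNNReal (w⁻¹ * B) with hLdef
    set V : ℝ → Matrix m m ℂ → Matrix m m ℂ :=
      fun t x => -(((w⁻¹ : ℝ) : ℂ)) • (x * K (τ t)) with hVdef
    have hLip : ∀ t, LipschitzOnWith L (V t) Set.univ := by
      intro t
      apply LipschitzWith.lipschitzOnWith
      apply LipschitzWith.of_dist_le_mul
      intro x y
      rw [dist_eq_norm, dist_eq_norm]
      have : V t x - V t y = -(((w⁻¹ : ℝ) : ℂ)) • ((x - y) * K (τ t)) := by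
        rw [hVdef]
        simp only [sub_mul, smul_sub]
      rw [this, norm_smul]
      have h1 : ‖(-(((w⁻¹ : ℝ) : ℂ)))‖ = w⁻¹ := by
        rw [norm_neg, Complex.norm_real, Real.norm_eq_abs, abs_of_pos (by positivity)]
      rw [h1]
      have h2 : ‖(x - y) * K (τ t)‖ ≤ ‖x - y‖ * ‖K (τ t)‖ := norm_mul_le _ _
      have h3 : ‖K (τ t)‖ ≤ B := hB _ (hτmem t)
      have hL : (L : ℝ) = w⁻¹ * B := Real.coe_toNNReal _ (by positivity)
      rw [hL]
      calc w⁻¹ * ‖(x - y) * K (τ t)‖ ≤ w⁻¹ * (‖x - y‖ * B) := by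
            apply mul_le_mul_of_nonneg_left _ (by positivity)
            calc ‖(x - y) * K (τ t)‖ ≤ ‖x - y‖ * ‖K (τ t)‖ := h2
              _ ≤ ‖x - y‖ * B := by
                  apply mul_le_mul_of_nonneg_left h3 (norm_nonneg _)
        _ = w⁻¹ * B * ‖x - y‖ := by ring
    have h0mem : (0 : ℝ) ∈ Set.Ioo a b := by
      constructor
      · rw [hadef]; linarith
      · linarith
    have hDcont : Continuous D := by
      rw [continuous_iff_continuousAt]
      exact fun s => (hDder s).continuousAt
    have heqon := ODE_solution_unique_of_mem_Icc (v := V) (s := fun _ => Set.univ) (K := L)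
      (fun t _ => hLip t) h0mem hDcont.continuousOn
      (fun t ht => by
        have : V t (D t) = -(((w⁻¹ : ℝ) : ℂ)) • (D t * K t) := by
          rw [hVdef]; simp only; rw [hτeq t ht]
        rw [this]; exact hDder t)
      (fun t _ => Set.mem_univ _)
      continuousOn_const
      (fun t ht => by
        have : V t ((fun _ : ℝ => (0 : Matrix m m ℂ)) t) = 0 := by
          simp [hVdef]
        rw [this]
        exact hasDerivAt_const t 0)
      (fun t _ => Set.mem_univ _)
      (by simpa using hD0)
    have hs₁ : s₁ ∈ Set.Icc a b := by
      constructor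
      · rw [hadef, hbdef]
        have := neg_abs_le s₁
        linarith
      · rw [hbdef]
        have := le_abs_self s₁
        linarith
    exact heqon hs₁
  funext s₁
  have hD := hDzero s₁
  have h1 : X s₁ * D s₁ = K s₁ - H s₁ := by
    rw [hDdef]
    show X s₁ * (M s₁ * (K s₁ - H s₁)) = _
    rw [← mul_assoc, hXM, one_mul]
  have h2 : K s₁ - H s₁ = 0 := by rw [← h1, hD, mul_zero]
  exact sub_eq_zero.mp h2

end RiccatiMain

/-- Global solvability of the matrix Riccati equation `|ω| H'(s) + H(s)² = 0`, `H(0) = H₀`,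
for a complex symmetric initial matrix `H₀` with positive definite imaginary part:
there is a unique smooth complex symmetric solution, and its imaginary part stays
positive definite for all `s ∈ ℝ`. -/
theorem stmt_2 (n : ℕ) (hn : 2 ≤ n) (w : ℝ) (hw : 0 < w)
    (H₀ : Matrix (Fin (n - 1)) (Fin (n - 1)) ℂ)
    (hsym : H₀ᵀ = H₀) (hpos : (H₀.map Complex.im).PosDef) :
    ∃ H : ℝ → Matrix (Fin (n - 1)) (Fin (n - 1)) ℂ,
      ((∀ i j, ContDiff ℝ (⊤ : ℕ∞) (fun s => H s i j)) ∧
       H 0 = H₀ ∧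
       (∀ s : ℝ, (H s)ᵀ = H s) ∧
       (∀ s : ℝ, (w : ℂ) • (Matrix.of fun i j => deriv (fun t => H t i j) s) + (H s) ^ 2 = 0)) ∧
      (∀ s : ℝ, ((H s).map Complex.im).PosDef) ∧
      (∀ H' : ℝ → Matrix (Fin (n - 1)) (Fin (n - 1)) ℂ,
        ((∀ i j, ContDiff ℝ (⊤ : ℕ∞) (fun s => H' s i j)) ∧
         H' 0 = H₀ ∧
         (∀ s : ℝ, (H' s)ᵀ = H' s) ∧
         (∀ s : ℝ, (w : ℂ) • (Matrix.of fun i j => deriv (fun t => H' t i j) s) + (H' s) ^ 2 = 0))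
        → H' = H) := by
  exact riccati_main w hw H₀ hsym hpos
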